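/- Let R be a principal ideal domain that is not a field. If R has infinitely many pairwise non-associate prime elements, then the set of prime elements is dense in the Macías topology on R \ {0}. -/

import Mathlib

/-- For nonzero `k`, the basic set `σₖ⁰ = {s ≠ 0 : ⟨k⟩ + ⟨s⟩ = R}` of the Macías topology. -/
def sigma0 (R : Type*) [CommRing R] (k : R) : Set {x : R // x ≠ 0} :=
  {s | Ideal.span {k} + Ideal.span {s.1} = ⊤}

/-- The Macías topology on `R \ {0}`, generated by the sets `σₖ⁰` for `k ≠ 0`. -/
def maciasTop (R : Type*) [CommRing R] : TopologicalSpace {x : R // x ≠ 0} :=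
  TopologicalSpace.generateFrom {U | ∃ k : R, k ≠ 0 ∧ U = sigma0 R k}

/-! Since `σ_a⁰ ∩ σ_b⁰ = σ_{ab}⁰` and `σ_1⁰` is everything, the sets `σₖ⁰` themselves form a
basis. A nonzero `k` has only finitely many prime divisors up to associates, so infinitely many
primes leave some prime `p ∤ k`; in a PID such a `p` is coprime to `k`, i.e. `p ∈ σₖ⁰`. -/

theorem UniqueFactorizationMonoid.exists_prime_not_dvd {α : Type*} [CommMonoidWithZero α]
    [UniqueFactorizationMonoid α] (hinf : (Associates.mk '' {p : α | Prime p}).Infinite)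
    {a : α} (ha : a ≠ 0) : ∃ p : α, Prime p ∧ ¬ p ∣ a := by
  classical
  obtain ⟨_, ⟨p, hp, rfl⟩, hp_new⟩ :=
    hinf.exists_notMem_finset ((factors a).map Associates.mk).toFinset
  refine ⟨p, hp, fun hpa => hp_new ?_⟩
  obtain ⟨q, hq, hpq⟩ := exists_mem_factors_of_dvd ha hp.irreducible hpa
  rw [Associates.mk_eq_mk_iff_associated.mpr hpq]
  exact Multiset.mem_toFinset.mpr (Multiset.mem_map_of_mem _ hq)

section Macias

variable {R : Type*} [CommRing R]

theorem mem_sigma0_iff {k : R} {s : {x : R // x ≠ 0}} : s ∈ sigma0 R k ↔ IsCoprime k s.1 := by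
  rw [← Ideal.isCoprime_span_singleton_iff, Ideal.isCoprime_iff_add, Ideal.one_eq_top]
  rfl

theorem sigma0_one : sigma0 R 1 = Set.univ :=
  Set.eq_univ_of_forall fun _ => mem_sigma0_iff.mpr isCoprime_one_left

theorem sigma0_mul (a b : R) : sigma0 R (a * b) = sigma0 R a ∩ sigma0 R b := by
  ext s
  simp only [Set.mem_inter_iff, mem_sigma0_iff, IsCoprime.mul_left_iff]

theorem isTopologicalBasis_maciasTop [IsDomain R] :
    @TopologicalSpace.IsTopologicalBasis _ (maciasTop R) {U | ∃ k : R, k ≠ 0 ∧ U = sigma0 R k} := by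
  let := maciasTop R
  have hbasis := TopologicalSpace.isTopologicalBasis_of_subbasis_of_inter
    (r := {U | ∃ k : R, k ≠ 0 ∧ U = sigma0 R k}) rfl <| by
      rintro _ ⟨a, ha, rfl⟩ _ ⟨b, hb, rfl⟩
      exact ⟨a * b, mul_ne_zero ha hb, (sigma0_mul a b).symm⟩
  have huniv : Set.univ ∈ {U | ∃ k : R, k ≠ 0 ∧ U = sigma0 R k} :=
    ⟨1, one_ne_zero, sigma0_one.symm⟩
  rwa [Set.insert_eq_of_mem huniv] at hbasis

theorem prime_mem_sigma0 [IsDomain R] [IsPrincipalIdealRing R] {p k : R} (hp : Prime p)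
    (hpk : ¬ p ∣ k) : ⟨p, hp.ne_zero⟩ ∈ sigma0 R k :=
  mem_sigma0_iff.mpr (hp.coprime_iff_not_dvd.mpr hpk).symm

end Macias

theorem stmt13_general (R : Type*) [CommRing R] [IsDomain R] [IsPrincipalIdealRing R]
    (hinf : (Associates.mk '' {p : R | Prime p}).Infinite) :
    @Dense _ (maciasTop R) {x : {x : R // x ≠ 0} | Prime x.1} := by
  let := maciasTop R
  rw [isTopologicalBasis_maciasTop.dense_iff]
  rintro _ ⟨k, hk, rfl⟩ -
  obtain ⟨p, hp, hpk⟩ := UniqueFactorizationMonoid.exists_prime_not_dvd hinf hk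
  exact ⟨⟨p, hp.ne_zero⟩, prime_mem_sigma0 hp hpk, hp⟩

theorem stmt13 (R : Type*) [CommRing R] [IsDomain R] [IsPrincipalIdealRing R]
    (hnf : ¬ IsField R)
    (hinf : (Associates.mk '' {p : R | Prime p}).Infinite) :
    @Dense _ (maciasTop R) {x : {x : R // x ≠ 0} | Prime x.1} :=
  stmt13_general R hinf
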